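/- arXiv:2409.09223 — 4 statements merged into one kernel-verified Lean document; each statement's English description precedes it below -/
import Mathlib

section
/- Soundness of existential instantiation with a fresh witness: let φ = ∃x·p(x) be a formula, c a fresh constant not occurring in the formula set R, and l a Boolean variable defined by the definition clauses for φ. Then R ∪ {l → φ, ¬l → ¬φ} is satisfiable if and only if R ∪ {l → φ, ¬l → ¬φ, l → p(c), ¬l → ¬p(c)} is satisfiable. -/
/-- Terms: variables or constant symbols. -/
inductive Tm where
  | var : ℕ → Tm
  | const : ℕ → Tm

/-- First-order formulas over terms. -/
inductive Fm where
  | atom : ℕ → List Tm → Fm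
  | neg : Fm → Fm
  | and : Fm → Fm → Fm
  | or  : Fm → Fm → Fm
  | ex  : ℕ → Fm → Fm
  | all : ℕ → Fm → Fm

def Tm.eval {D : Type*} (cI : ℕ → D) (v : ℕ → D) : Tm → D
  | var x => v x
  | const c => cI c

def Fm.Sat {D : Type*} (I : ℕ → List D → Prop) (cI : ℕ → D) :
    (ℕ → D) → Fm → Prop
  | v, atom p ts => I p (ts.map (Tm.eval cI v))
  | v, neg φ => ¬ Fm.Sat I cI v φ
  | v, and φ ψ => Fm.Sat I cI v φ ∧ Fm.Sat I cI v ψ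
  | v, or φ ψ => Fm.Sat I cI v φ ∨ Fm.Sat I cI v ψ
  | v, ex x φ => ∃ d : D, Fm.Sat I cI (Function.update v x d) φ
  | v, all x φ => ∀ d : D, Fm.Sat I cI (Function.update v x d) φ

def Tm.consts : Tm → Finset ℕ
  | var _ => ∅
  | const c => {c}

def Fm.consts : Fm → Finset ℕ
  | atom _ ts => ts.foldr (fun t acc => t.consts ∪ acc) ∅
  | neg φ => φ.consts
  | and φ ψ => φ.consts ∪ ψ.consts
  | or φ ψ => φ.consts ∪ ψ.consts
  | ex _ φ => φ.consts
  | all _ φ => φ.consts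

/-- Substitute the constant `c` for the free variable `x`. -/
def Tm.substC (x c : ℕ) : Tm → Tm
  | var y => if y = x then const c else var y
  | const d => const d

def Fm.substC (x c : ℕ) : Fm → Fm
  | atom p ts => atom p (ts.map (Tm.substC x c))
  | neg φ => neg (φ.substC x c)
  | and φ ψ => and (φ.substC x c) (ψ.substC x c)
  | or φ ψ => or (φ.substC x c) (ψ.substC x c)
  | ex y φ => ex y (if y = x then φ else φ.substC x c)
  | all y φ => all y (if y = x then φ else φ.substC x c)

/-- Implication `a → b` as a formula. -/
def Fm.imp (a b : Fm) : Fm := .or (.neg a) b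

/-- Satisfiability of a set of formulas over some nonempty domain. -/
def SatSet (S : Set Fm) : Prop :=
  ∃ (D : Type) (_ : Nonempty D) (I : ℕ → List D → Prop) (cI : ℕ → D)
    (v : ℕ → D), ∀ φ ∈ S, Fm.Sat I cI v φ

/-!
Interpret the fresh constant `c` as a witness of `∃x·p(x)` if there is one, and arbitrarily
otherwise. Since `c` is fresh, this changes the truth value of no formula of `R` nor of `∃x·p(x)`,
while it makes `p(c)` equivalent to `∃x·p(x)`; so the clauses for `p(c)` follow from those for
`∃x·p(x)`. The converse holds because the second set contains the first.
-/

open Function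

theorem Tm.eval_update_const_of_notMem {D : Type*} {cI : ℕ → D} {c : ℕ} {t : Tm}
    (h : c ∉ t.consts) (d : D) (v : ℕ → D) :
    t.eval (update cI c d) v = t.eval cI v := by
  cases t with
  | var y => rfl
  | const e =>
    simp only [Tm.consts, Finset.mem_singleton] at h
    exact update_of_ne (Ne.symm h) d cI

theorem Tm.eval_substC {D : Type*} (cI v : ℕ → D) (x c : ℕ) (t : Tm) :
    (t.substC x c).eval cI v = t.eval cI (update v x (cI c)) := by
  cases t with
  | var y =>
    by_cases h : y = x
    · subst h; simp [Tm.substC, Tm.eval]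
    · simp [Tm.substC, h, Tm.eval]
  | const e => rfl

theorem Fm.mem_consts_atom {c q : ℕ} {ts : List Tm} :
    c ∈ (atom q ts).consts ↔ ∃ t ∈ ts, c ∈ t.consts := by
  induction ts <;> simp_all [Fm.consts]

section Sat

variable {D : Type*} {I : ℕ → List D → Prop} {cI v : ℕ → D}

@[simp]
theorem Fm.sat_neg {φ : Fm} : Sat I cI v (neg φ) ↔ ¬ Sat I cI v φ := Iff.rfl

@[simp]
theorem Fm.sat_imp {φ ψ : Fm} : Sat I cI v (φ.imp ψ) ↔ (Sat I cI v φ → Sat I cI v ψ) := by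
  simp only [Fm.imp, Fm.Sat, imp_iff_not_or]

@[simp]
theorem Fm.sat_atom_nil {q : ℕ} : Sat I cI v (atom q []) ↔ I q [] := Iff.rfl

theorem Fm.sat_update_const_of_notMem {c : ℕ} {φ : Fm} (h : c ∉ φ.consts) (d : D)
    (v : ℕ → D) : Sat I (update cI c d) v φ ↔ Sat I cI v φ := by
  induction φ generalizing v with
  | atom q ts =>
    have hts : ∀ t ∈ ts, c ∉ t.consts := fun t ht hc => h (mem_consts_atom.2 ⟨t, ht, hc⟩)
    simp only [Fm.Sat]
    rw [List.map_congr_left fun t ht => Tm.eval_update_const_of_notMem (hts t ht) d v]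
  | neg φ ih => exact not_congr (ih h v)
  | and φ ψ ih₁ ih₂ =>
    simp only [Fm.consts, Finset.mem_union, not_or] at h
    exact and_congr (ih₁ h.1 v) (ih₂ h.2 v)
  | or φ ψ ih₁ ih₂ =>
    simp only [Fm.consts, Finset.mem_union, not_or] at h
    exact or_congr (ih₁ h.1 v) (ih₂ h.2 v)
  | ex y φ ih => exact exists_congr fun e => ih h _
  | all y φ ih => exact forall_congr' fun e => ih h _

theorem Fm.sat_substC (x c : ℕ) (φ : Fm) (v : ℕ → D) :
    Sat I cI v (φ.substC x c) ↔ Sat I cI (update v x (cI c)) φ := by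
  induction φ generalizing v with
  | atom q ts =>
    simp only [Fm.substC, Fm.Sat, List.map_map, comp_def, Tm.eval_substC]
  | neg φ ih => exact not_congr (ih v)
  | and φ ψ ih₁ ih₂ => exact and_congr (ih₁ v) (ih₂ v)
  | or φ ψ ih₁ ih₂ => exact or_congr (ih₁ v) (ih₂ v)
  | ex y φ ih =>
    by_cases h : y = x
    · subst h
      simp only [Fm.substC, if_true, Fm.Sat, update_idem]
    · simp only [Fm.substC, if_neg h, Fm.Sat]
      exact exists_congr fun d => by rw [ih, update_comm h]
  | all y φ ih =>
    by_cases h : y = x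
    · subst h
      simp only [Fm.substC, if_true, Fm.Sat, update_idem]
    · simp only [Fm.substC, if_neg h, Fm.Sat]
      exact forall_congr' fun d => by rw [ih, update_comm h]

theorem Fm.exists_sat_substC_iff_sat_ex [Nonempty D] {x c : ℕ} {p : Fm} (hp : c ∉ p.consts) :
    ∃ d, (Sat I (update cI c d) v (p.substC x c) ↔ Sat I cI v (ex x p)) := by
  have hsubst : ∀ d, Sat I (update cI c d) v (p.substC x c) ↔ Sat I cI (update v x d) p :=
    fun d => by rw [sat_substC, update_self, sat_update_const_of_notMem hp]
  by_cases hex : Sat I cI v (ex x p)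
  · obtain ⟨d, hd⟩ := hex
    exact ⟨d, iff_of_true ((hsubst d).2 hd) ⟨d, hd⟩⟩
  · exact ⟨Classical.arbitrary D, iff_of_false (fun hd => hex ⟨_, (hsubst _).1 hd⟩) hex⟩

end Sat

theorem SatSet.mono {S T : Set Fm} (hST : S ⊆ T) : SatSet T → SatSet S
  | ⟨D, hD, I, cI, v, hT⟩ => ⟨D, hD, I, cI, v, fun φ hφ => hT φ (hST hφ)⟩

/-- Soundness of existential instantiation with a fresh witness: for
`φ = ∃x·p(x)`, a constant `c` occurring in no formula of `R` nor in `p`, and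
a Boolean definition variable `l` (a 0-ary atom) with its definition clauses,
`R ∪ {l → φ, ¬l → ¬φ}` is satisfiable iff
`R ∪ {l → φ, ¬l → ¬φ, l → p(c), ¬l → ¬p(c)}` is satisfiable. -/
theorem existentialInst_fresh_equisat (R : Set Fm) (p : Fm) (x c lp : ℕ)
    (hfreshR : ∀ φ ∈ R, c ∉ φ.consts)
    (hfreshp : c ∉ p.consts) :
    SatSet (R ∪ {Fm.imp (.atom lp []) (.ex x p),
                 Fm.imp (.neg (.atom lp [])) (.neg (.ex x p))}) ↔
    SatSet (R ∪ {Fm.imp (.atom lp []) (.ex x p),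
                 Fm.imp (.neg (.atom lp [])) (.neg (.ex x p)),
                 Fm.imp (.atom lp []) (p.substC x c),
                 Fm.imp (.neg (.atom lp [])) (.neg (p.substC x c))}) := by
  refine ⟨fun ⟨D, hD, I, cI, v, hsat⟩ => ?_, SatSet.mono <| Set.union_subset_union_right R <|
    by simp [Set.insert_subset_iff]⟩
  simp only [Set.mem_union, Set.mem_insert_iff, Set.mem_singleton_iff, or_imp, forall_and,
    forall_eq] at hsat
  obtain ⟨hR, hpos, hneg⟩ := hsat
  obtain ⟨d, hd⟩ := Fm.exists_sat_substC_iff_sat_ex (I := I) (cI := cI) (v := v) (x := x) hfreshp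
  have hex : Fm.Sat I (update cI c d) v (.ex x p) ↔ Fm.Sat I cI v (.ex x p) :=
    Fm.sat_update_const_of_notMem (φ := .ex x p) hfreshp d v
  refine ⟨D, hD, I, update cI c d, v, ?_⟩
  simp only [Set.mem_union, Set.mem_insert_iff, Set.mem_singleton_iff, or_imp, forall_and,
    forall_eq]
  refine ⟨fun φ hφ => (Fm.sat_update_const_of_notMem (hfreshR φ hφ) d v).2 (hR φ hφ), ?_⟩
  simp only [Fm.sat_imp, Fm.sat_neg, Fm.sat_atom_nil, hex, hd] at hpos hneg ⊢
  exact ⟨hpos, hneg, hpos, hneg⟩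
end

section
/- Soundness of the Substitute rule (propositional version): if ψ is a subformula occurrence of φ and l_ψ is a variable with definition clauses l_ψ → ψ and ¬l_ψ → ¬ψ, then {l_φ → φ, ¬l_ψ → ¬ψ} entails l_φ → φ[ψ ← l_ψ], and {¬l_φ → ¬φ, l_ψ → ψ} entails ¬l_φ → ¬φ[ψ ← l_ψ], where φ[ψ ← l_ψ] denotes replacing the occurrence of ψ in φ by l_ψ and ψ occurs positively in φ. -/
/-!
With `Bool` ordered by `false < true`, the value of `C[χ]` is monotone in the value of `χ` when
the hole of `C` is positive. The clause `¬l_ψ → ¬ψ` says `ψ ≤ l_ψ` and the clause `l_ψ → ψ` says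
`l_ψ ≤ ψ`, so replacing `ψ` by `l_ψ` can only make `C[·]` truer in the first case and falser in
the second.
-/

inductive PForm where
  | var : ℕ → PForm
  | tru : PForm
  | fls : PForm
  | neg : PForm → PForm
  | and : PForm → PForm → PForm
  | or  : PForm → PForm → PForm

def PForm.eval (v : ℕ → Bool) : PForm → Bool
  | var n => v n
  | tru => true
  | fls => false
  | neg φ => !(φ.eval v)
  | and φ ψ => φ.eval v && ψ.eval v
  | or φ ψ => φ.eval v || ψ.eval v

/-- A one-hole formula context, marking an occurrence of a subformula. -/
inductive Ctx where
  | hole : Ctx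
  | neg  : Ctx → Ctx
  | andL : Ctx → PForm → Ctx
  | andR : PForm → Ctx → Ctx
  | orL  : Ctx → PForm → Ctx
  | orR  : PForm → Ctx → Ctx

/-- Filling the hole of a context with a formula. -/
def Ctx.fill : Ctx → PForm → PForm
  | hole, ψ => ψ
  | neg C, ψ => .neg (C.fill ψ)
  | andL C χ, ψ => .and (C.fill ψ) χ
  | andR χ C, ψ => .and χ (C.fill ψ)
  | orL C χ, ψ => .or (C.fill ψ) χ
  | orR χ C, ψ => .or χ (C.fill ψ)

/-- The occurrence is positive iff the hole is under an even number of negations. -/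
def Ctx.positive : Ctx → Bool
  | hole => true
  | neg C => !C.positive
  | andL C _ => C.positive
  | andR _ C => C.positive
  | orL C _ => C.positive
  | orR _ C => C.positive

namespace Ctx

theorem eval_fill_le_of_le (C : Ctx) (v : ℕ → Bool) {a b : PForm} (h : a.eval v ≤ b.eval v) :
    (C.positive = true → (C.fill a).eval v ≤ (C.fill b).eval v) ∧
    (C.positive = false → (C.fill b).eval v ≤ (C.fill a).eval v) := by
  induction C with
  | hole => exact ⟨fun _ => h, nofun⟩
  | neg C ih =>
    simp only [positive, Bool.not_eq_true', Bool.not_eq_false', fill, PForm.eval]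
    exact ⟨fun hC => compl_le_compl (ih.2 hC), fun hC => compl_le_compl (ih.1 hC)⟩
  | andL C χ ih =>
    exact ⟨fun hC => inf_le_inf (ih.1 hC) le_rfl, fun hC => inf_le_inf (ih.2 hC) le_rfl⟩
  | andR χ C ih =>
    exact ⟨fun hC => inf_le_inf le_rfl (ih.1 hC), fun hC => inf_le_inf le_rfl (ih.2 hC)⟩
  | orL C χ ih =>
    exact ⟨fun hC => sup_le_sup (ih.1 hC) le_rfl, fun hC => sup_le_sup (ih.2 hC) le_rfl⟩
  | orR χ C ih =>
    exact ⟨fun hC => sup_le_sup le_rfl (ih.1 hC), fun hC => sup_le_sup le_rfl (ih.2 hC)⟩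

end Ctx

/-- Soundness of the Substitute rule (propositional version): if `ψ` occurs
positively in `φ = C[ψ]` and `l_ψ` has definition clauses for `ψ`, then
`{l_φ → φ, ¬l_ψ → ¬ψ} ⊨ l_φ → C[l_ψ]` and
`{¬l_φ → ¬φ, l_ψ → ψ} ⊨ ¬l_φ → ¬C[l_ψ]`. -/
theorem substitute_sound (C : Ctx) (ψ : PForm) (lphi lpsi : ℕ)
    (hpos : C.positive = true) :
    (∀ v : ℕ → Bool,
        (v lphi = true → (C.fill ψ).eval v = true) →
        (v lpsi = false → ψ.eval v = false) →
        (v lphi = true → (C.fill (.var lpsi)).eval v = true)) ∧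
    (∀ v : ℕ → Bool,
        (v lphi = false → (C.fill ψ).eval v = false) →
        (v lpsi = true → ψ.eval v = true) →
        (v lphi = false → (C.fill (.var lpsi)).eval v = false)) := by
  constructor
  · intro v hφ hψ hl
    have hdef : ψ.eval v ≤ (PForm.var lpsi).eval v :=
      Bool.le_iff_imp.2 fun h => by simpa [PForm.eval] using mt hψ (by simp [h])
    exact top_le_iff.1 ((hφ hl).symm.trans_le ((C.eval_fill_le_of_le v hdef).1 hpos))
  · intro v hφ hψ hl
    have hdef : (PForm.var lpsi).eval v ≤ ψ.eval v := Bool.le_iff_imp.2 hψ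
    exact le_bot_iff.1 (((C.eval_fill_le_of_le v hdef).1 hpos).trans_eq (hφ hl))
end

section
/- Correctness of backward proof checking: let a proof d₁,…,dₙ be given where each step derives resources from dependencies, and let core be any subset of steps containing dₙ such that for every step in core, each of its dependency resources is either an input formula or is derived by an earlier step that is also in core. If every step in core satisfies its rule's enabling condition and dₙ derives ⊥, then replaying only the steps of core (in order) from the initial state yields a non-error state containing ⊥. -/
/-!
Filtering the indexed steps by membership in `core` keeps them in increasing index order. Every
dependency of a kept step is an input or an output of a kept step with a smaller index, which
has already been replayed; so each kept step finds its dependencies in the current state, no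
error occurs, and the final state contains the outputs of all kept steps, the last one among them.
-/

open scoped Classical in
/-- Replay a list of derivation steps `(dep, out, ok)` from the given set of
input resources: a step is applied only if its enabling condition `ok` holds
and its dependencies are contained in the current resource set; otherwise the
error state `none` results. -/
noncomputable def replay {Res : Type*} (inputs : Set Res)
    (l : List (Set Res × Set Res × Prop)) : Option (Set Res) :=
  l.foldl
    (fun s step =>
      match s with
      | none => none
      | some st => if step.2.2 ∧ step.1 ⊆ st then some (st ∪ step.2.1) else none)
    (some inputs)

namespace List

theorem mem_zip_range_length_iff {α : Type*} {l : List α} {i : ℕ} {a : α} :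
    (i, a) ∈ (range l.length).zip l ↔ ∃ h : i < l.length, l[i] = a := by
  simp only [mem_iff_getElem, getElem_zip, getElem_range, length_zip, length_range, min_self,
    Prod.mk.injEq]
  constructor
  · rintro ⟨j, hj, rfl, rfl⟩
    exact ⟨hj, rfl⟩
  · rintro ⟨hi, rfl⟩
    exact ⟨i, hi, rfl, rfl⟩

theorem pairwise_fst_lt_zip_range {α : Type*} (l : List α) :
    ((range l.length).zip l).Pairwise (fun p q => p.1 < q.1) := by
  rw [← pairwise_map (f := Prod.fst), map_fst_zip (by simp)]
  exact pairwise_lt_range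

end List

section Replay

variable {Res : Type*}

theorem replay_cons_of_enabled {st : Set Res} {a : Set Res × Set Res × Prop}
    (l : List (Set Res × Set Res × Prop)) (hok : a.2.2) (hdep : a.1 ⊆ st) :
    replay st (a :: l) = replay (st ∪ a.2.1) l := by
  simp only [replay, List.foldl_cons, hok, hdep, and_self, if_true]

theorem replay_map_snd_eq_some {ι : Type*} [Preorder ι]
    (q : List (ι × (Set Res × Set Res × Prop)))
    (hsorted : q.Pairwise (fun p p' => p.1 < p'.1)) (st : Set Res)
    (hok : ∀ p ∈ q, p.2.2.2)
    (hdep : ∀ p ∈ q, ∀ r ∈ p.2.1, r ∈ st ∨ ∃ p' ∈ q, p'.1 < p.1 ∧ r ∈ p'.2.2.1) :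
    replay st (q.map Prod.snd) = some (st ∪ ⋃ p ∈ q, p.2.2.1) := by
  induction q generalizing st with
  | nil => simp [replay]
  | cons p q ih =>
    obtain ⟨hhead, htail⟩ := List.pairwise_cons.mp hsorted
    have hdep_p : p.2.1 ⊆ st := fun r hr => by
      rcases hdep p List.mem_cons_self r hr with h | ⟨p', hp', hlt, -⟩
      · exact h
      · rcases List.mem_cons.mp hp' with rfl | hp'
        · exact absurd hlt (lt_irrefl _)
        · exact absurd hlt (hhead p' hp').asymm
    rw [List.map_cons, replay_cons_of_enabled _ (hok p List.mem_cons_self) hdep_p,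
      ih htail _ (fun p' hp' => hok p' (List.mem_cons_of_mem _ hp'))]
    · simp [Set.union_assoc]
    · intro p' hp' r hr
      rcases hdep p' (List.mem_cons_of_mem _ hp') r hr with h | ⟨p'', hp'', hlt, hr''⟩
      · exact Or.inl (Or.inl h)
      · rcases List.mem_cons.mp hp'' with rfl | hp''
        · exact Or.inl (Or.inr hr'')
        · exact Or.inr ⟨p'', hp'', hlt, hr''⟩

end Replay

theorem backward_check_correct_general {Res : Type*} (bot : Res) (inputs : Set Res)
    (steps : List (Set Res × Set Res × Prop))
    (core : Finset ℕ)
    (hne : steps ≠ [])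
    (hlastmem : steps.length - 1 ∈ core)
    (hok : ∀ i ∈ core, ∀ hi : i < steps.length, (steps.get ⟨i, hi⟩).2.2)
    (hdep : ∀ i ∈ core, ∀ hi : i < steps.length,
        ∀ r ∈ (steps.get ⟨i, hi⟩).1,
          r ∈ inputs ∨
            ∃ j ∈ core, j < i ∧ ∃ hj : j < steps.length,
              r ∈ (steps.get ⟨j, hj⟩).2.1)
    (hbot : bot ∈ (steps.getLast hne).2.1) :
    ∃ S : Set Res,
      replay inputs ((((List.range steps.length).zip steps).filter (fun p => p.1 ∈ core)).map Prod.snd)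
        = some S ∧ bot ∈ S := by
  set q := ((List.range steps.length).zip steps).filter (fun p => p.1 ∈ core)
  have hmem {i : ℕ} {s} : (i, s) ∈ q ↔ i ∈ core ∧ ∃ h : i < steps.length, steps[i] = s := by
    simp [q, List.mem_filter, List.mem_zip_range_length_iff, and_comm]
  refine ⟨_, replay_map_snd_eq_some q ((List.pairwise_fst_lt_zip_range steps).filter _) inputs
    ?_ ?_, ?_⟩
  · rintro ⟨i, s⟩ hp
    obtain ⟨hi, hlt, rfl⟩ := hmem.mp hp
    exact hok i hi hlt
  · rintro ⟨i, s⟩ hp r hr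
    obtain ⟨hi, hlt, rfl⟩ := hmem.mp hp
    refine (hdep i hi hlt r hr).imp_right ?_
    rintro ⟨j, hj, hji, hjlt, hrj⟩
    exact ⟨(j, steps[j]), hmem.mpr ⟨hj, hjlt, rfl⟩, hji, hrj⟩
  · have hlast := List.length_pos_iff.mpr hne
    rw [List.getLast_eq_getElem] at hbot
    exact Or.inr (Set.mem_biUnion (hmem.mpr ⟨hlastmem, by omega, rfl⟩) hbot)

/-- Correctness of backward proof checking: if `core` is a set of step indices
containing the last step such that every dependency resource of a core step is
an input or is derived by an earlier core step, every core step satisfies its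
enabling condition, and the last step derives `⊥`, then replaying only the
core steps (in order) from the inputs yields a non-error state containing `⊥`. -/
theorem backward_check_correct {Res : Type*} (bot : Res) (inputs : Set Res)
    (steps : List (Set Res × Set Res × Prop))
    (core : Finset ℕ)
    (hne : steps ≠ [])
    (hrange : ∀ i ∈ core, i < steps.length)
    (hlastmem : steps.length - 1 ∈ core)
    (hok : ∀ i ∈ core, ∀ hi : i < steps.length, (steps.get ⟨i, hi⟩).2.2)
    (hdep : ∀ i ∈ core, ∀ hi : i < steps.length,
        ∀ r ∈ (steps.get ⟨i, hi⟩).1,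
          r ∈ inputs ∨
            ∃ j ∈ core, j < i ∧ ∃ hj : j < steps.length,
              r ∈ (steps.get ⟨j, hj⟩).2.1)
    (hbot : bot ∈ (steps.getLast hne).2.1) :
    ∃ S : Set Res,
      replay inputs ((((List.range steps.length).zip steps).filter (fun p => p.1 ∈ core)).map Prod.snd)
        = some S ∧ bot ∈ S :=
  backward_check_correct_general bot inputs steps core hne hlastmem hok hdep hbot
end

section
/- The grounding over-approximation is sound for unsatisfiability: if the grounded quantifier-free formula G(φ, D') produced by instantiating each existential quantifier with one fresh object and each universal quantifier over all objects of D' is unsatisfiable, then φ has no satisfying solution in any finite domain. -/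
/-- Relational objects: a pair (class, identifier); the class of an object is
its first component. -/
abbrev Obj := ℕ × ℕ

/-- Terms of FOL*. -/
inductive STm where
  | const : ℤ → STm
  | attr : ℕ ⊕ Obj → ℕ → STm
  | add : STm → STm → STm
  | negt : STm → STm

/-- FOL* formulas in the quantified fragment. -/
inductive SF where
  | tru : SF
  | fls : SF
  | eq : STm → STm → SF
  | lt : STm → STm → SF
  | ext : ℕ ⊕ Obj → SF
  | neg : SF → SF
  | and : SF → SF → SF
  | or : SF → SF → SF
  | ex : ℕ → ℕ → SF → SF   -- `ex x r ψ` : ∃ x : r · ψ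
  | all : ℕ → ℕ → SF → SF  -- `all x r ψ` : ∀ x : r · ψ

def STm.eval (vAttr : Obj → ℕ → ℤ) (env : ℕ → Obj) : STm → ℤ
  | const z => z
  | attr (.inl x) i => vAttr (env x) i
  | attr (.inr o) i => vAttr o i
  | add t t' => t.eval vAttr env + t'.eval vAttr env
  | negt t => - t.eval vAttr env

/-- FOL* satisfaction in a finite domain `D`. -/
def SF.Sat (D : Finset Obj) (vAttr : Obj → ℕ → ℤ) (vExt : Obj → Bool) :
    (ℕ → Obj) → SF → Prop
  | _, tru => True
  | _, fls => False
  | env, eq t t' => t.eval vAttr env = t'.eval vAttr env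
  | env, lt t t' => t.eval vAttr env < t'.eval vAttr env
  | env, ext (.inl x) => vExt (env x) = true
  | _, ext (.inr o) => vExt o = true
  | env, neg φ => ¬ SF.Sat D vAttr vExt env φ
  | env, and φ ψ => SF.Sat D vAttr vExt env φ ∧ SF.Sat D vAttr vExt env ψ
  | env, or φ ψ => SF.Sat D vAttr vExt env φ ∨ SF.Sat D vAttr vExt env ψ
  | env, ex x r ψ => ∃ o ∈ D, o.1 = r ∧ vExt o = true ∧
      SF.Sat D vAttr vExt (Function.update env x o) ψ
  | env, all x r ψ => ∀ o ∈ D, o.1 = r → (vExt o = true →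
      SF.Sat D vAttr vExt (Function.update env x o) ψ)

/-- Grounding of a term: resolve object variables via `env`. -/
def STm.ground (env : ℕ → Obj) : STm → STm
  | const z => const z
  | attr (.inl x) i => attr (.inr (env x)) i
  | attr (.inr o) i => attr (.inr o) i
  | add t t' => add (t.ground env) (t'.ground env)
  | negt t => negt (t.ground env)

/-- The over-approximating grounding `G(φ, D')`: each existential quantifier
`∃ x : r · ψ` is instantiated with one fresh object `(r, n)` (where `n` is a
fresh-name counter, threaded through the computation), producing
`o'.ext ∧ G(ψ[x←o'])`, and each universal quantifier is instantiated over all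
objects of the matching class in `D'`, producing the conjunction of
`o'.ext → G(ψ[x←o'])`; `G` distributes over ∧ and ∨, and atoms are grounded
via the environment. -/
noncomputable def G (D' : Finset Obj) : SF → (ℕ → Obj) → ℕ → SF × ℕ
  | .tru, _, n => (.tru, n)
  | .fls, _, n => (.fls, n)
  | .eq t t', env, n => (.eq (t.ground env) (t'.ground env), n)
  | .lt t t', env, n => (.lt (t.ground env) (t'.ground env), n)
  | .ext (.inl x), env, n => (.ext (.inr (env x)), n)
  | .ext (.inr o), _, n => (.ext (.inr o), n)
  | .neg φ, env, n =>
      let p := G D' φ env n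
      (.neg p.1, p.2)
  | .and φ ψ, env, n =>
      let p := G D' φ env n
      let q := G D' ψ env p.2
      (.and p.1 q.1, q.2)
  | .or φ ψ, env, n =>
      let p := G D' φ env n
      let q := G D' ψ env p.2
      (.or p.1 q.1, q.2)
  | .ex x r ψ, env, n =>
      let p := G D' ψ (Function.update env x (r, n)) (n + 1)
      (.and (.ext (.inr (r, n))) p.1, p.2)
  | .all x r ψ, env, n =>
      (D'.filter (fun o => o.1 = r)).toList.foldl
        (fun acc o =>
          let p := G D' ψ (Function.update env x o) acc.2
          (.and acc.1 (.or (.neg (.ext (.inr o))) p.1), p.2))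
        (.tru, n)
  termination_by φ _ _ => sizeOf φ
  decreasing_by all_goals first | (simp; omega) | simp

/-- Negation normal form: negations occur only directly in front of atoms. -/
inductive IsNNF : SF → Prop
  | tru : IsNNF .tru
  | fls : IsNNF .fls
  | eq (t t' : STm) : IsNNF (.eq t t')
  | lt (t t' : STm) : IsNNF (.lt t t')
  | ext (r : ℕ ⊕ Obj) : IsNNF (.ext r)
  | neq (t t' : STm) : IsNNF (.neg (.eq t t'))
  | nlt (t t' : STm) : IsNNF (.neg (.lt t t'))
  | next (r : ℕ ⊕ Obj) : IsNNF (.neg (.ext r))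
  | and {a b : SF} : IsNNF a → IsNNF b → IsNNF (.and a b)
  | or {a b : SF} : IsNNF a → IsNNF b → IsNNF (.or a b)
  | ex (x r : ℕ) {p : SF} : IsNNF p → IsNNF (.ex x r p)
  | all (x r : ℕ) {p : SF} : IsNNF p → IsNNF (.all x r p)

/-- A term is pure if it references objects only through variables. -/
def STm.Pure : STm → Prop
  | .const _ => True
  | .attr (.inl _) _ => True
  | .attr (.inr _) _ => False
  | .add t t' => t.Pure ∧ t'.Pure
  | .negt t => t.Pure

/-- A formula is pure if it references objects only through variables. -/
def SF.Pure : SF → Prop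
  | .tru => True
  | .fls => True
  | .eq t t' => t.Pure ∧ t'.Pure
  | .lt t t' => t.Pure ∧ t'.Pure
  | .ext (.inl _) => True
  | .ext (.inr _) => False
  | .neg φ => φ.Pure
  | .and φ ψ => φ.Pure ∧ ψ.Pure
  | .or φ ψ => φ.Pure ∧ ψ.Pure
  | .ex _ _ φ => φ.Pure
  | .all _ _ φ => φ.Pure

def STm.vars : STm → Finset ℕ
  | .const _ => ∅
  | .attr (.inl x) _ => {x}
  | .attr (.inr _) _ => ∅
  | .add t t' => t.vars ∪ t'.vars
  | .negt t => t.vars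

/-- Free object variables of a formula. -/
def SF.freeVars : SF → Finset ℕ
  | .tru => ∅
  | .fls => ∅
  | .eq t t' => t.vars ∪ t'.vars
  | .lt t t' => t.vars ∪ t'.vars
  | .ext (.inl x) => {x}
  | .ext (.inr _) => ∅
  | .neg φ => φ.freeVars
  | .and φ ψ => φ.freeVars ∪ ψ.freeVars
  | .or φ ψ => φ.freeVars ∪ ψ.freeVars
  | .ex x _ φ => φ.freeVars.erase x
  | .all x _ φ => φ.freeVars.erase x

/-! A model `(D, vAttr, vExt)` of `φ` yields a valuation of `G(φ, D')` once every object `o`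
is sent to a witness `α o` in `D`: `o` inherits the attributes of `α o`, and `o.ext` holds iff
`α o` is defined. Following `G` along the branches the model satisfies pairs each fresh object
with the model's witness, and each universal instance at `o ∈ D'` with the witness `α o`. These
pairs depend on `α` itself (an object of `D'` may also be a fresh object), so `α` has to be a
fixed point of this construction. The construction is monotone for extension of partial maps,
and its pairs carry distinct fresh names below `G`'s final counter and witnesses in the finite
set `D`, so iterating it from the empty map stabilizes. -/

def optionGraph {ι κ : Type*} (f : ι → Option κ) : Set (ι × κ) := {p | f p.1 = some p.2}

theorem optionGraph_injective {ι κ : Type*} : Function.Injective (optionGraph (ι := ι) (κ := κ)) :=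
  fun _ _ h => funext fun i => Option.ext fun k => Set.ext_iff.1 h (i, k)

theorem exists_isFixedPt_of_optionGraph_mono {ι κ : Type*} (F : (ι → Option κ) → ι → Option κ)
    (hF : ∀ f f', optionGraph f ⊆ optionGraph f' → optionGraph (F f) ⊆ optionGraph (F f'))
    {T : Set (ι × κ)} (hT : T.Finite) (hFT : ∀ f, optionGraph (F f) ⊆ T) :
    ∃ f, Function.IsFixedPt F f := by
  set s : ℕ → Set (ι × κ) := fun n => optionGraph (F^[n] fun _ => none)
  have hs : Monotone s := by
    refine monotone_nat_of_le_succ fun n => ?_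
    induction n with
    | zero => intro p hp; simp [s, optionGraph] at hp
    | succ n ih => simpa only [s, Function.iterate_succ_apply'] using hF _ _ ih
  have hsT : ∀ n, s n ∈ 𝒫 T := by
    rintro (_ | n)
    · intro p hp; simp [s, optionGraph] at hp
    · simp only [s, Set.mem_powerset_iff, Function.iterate_succ_apply']
      exact hFT _
  obtain ⟨a, b, hab, heq⟩ := hT.powerset.exists_lt_map_eq_of_forall_mem hsT
  have hstable : s (a + 1) = s a := le_antisymm ((hs hab.nat_succ_le).trans heq.ge) (hs a.le_succ)
  refine ⟨F^[a] fun _ => none, optionGraph_injective ?_⟩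
  rwa [← Function.iterate_succ_apply' F]

theorem List.lookup_eq_some_iff_mem {α β : Type*} [BEq α] [LawfulBEq α] {l : List (α × β)}
    (hl : (l.map Prod.fst).Nodup) {a : α} {b : β} : l.lookup a = some b ↔ (a, b) ∈ l := by
  induction l with
  | nil => simp
  | cons p l ih =>
    obtain ⟨k, c⟩ := p
    simp only [List.map_cons, List.nodup_cons, List.mem_map] at hl
    by_cases hak : a = k
    · subst hak
      simp only [List.lookup_cons_self, Option.some.injEq, List.mem_cons, Prod.mk.injEq, true_and]
      exact ⟨fun h => .inl h.symm, fun h => h.elim Eq.symm fun h' => (hl.1 ⟨_, h', rfl⟩).elim⟩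
    · simp [List.lookup_cons, beq_false_of_ne hak, ih hl.2, hak]

def threadedConcat {α β : Type*} (step : α → ℕ → ℕ) (body : α → ℕ → List β) :
    List α → ℕ → List β
  | [], _ => []
  | a :: l, m => body a m ++ threadedConcat step body l (step a m)

theorem mem_threadedConcat {α β : Type*} {step : α → ℕ → ℕ} {body : α → ℕ → List β}
    {l : List α} {m : ℕ} {b : β} (h : b ∈ threadedConcat step body l m) :
    ∃ a ∈ l, ∃ m', b ∈ body a m' := by
  induction l generalizing m with
  | nil => simp [threadedConcat] at h
  | cons a l ih =>
    rcases List.mem_append.1 h with h | h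
    · exact ⟨a, List.mem_cons_self, m, h⟩
    · obtain ⟨a', ha', m', h'⟩ := ih h
      exact ⟨a', List.mem_cons_of_mem _ ha', m', h'⟩

theorem threadedConcat_subset {α β : Type*} {step : α → ℕ → ℕ} {body body' : α → ℕ → List β}
    (h : ∀ a m, body a m ⊆ body' a m) (l : List α) (m : ℕ) :
    threadedConcat step body l m ⊆ threadedConcat step body' l m := by
  induction l generalizing m with
  | nil => exact List.Subset.refl _
  | cons a l ih =>
    exact List.append_subset.2
      ⟨List.subset_append_of_subset_left _ (h a m), List.subset_append_of_subset_right _ (ih _)⟩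

def FreshIn (l : List (Obj × Obj)) (a b : ℕ) : Prop :=
  a ≤ b ∧ l.Pairwise (fun p q => p.1.2 < q.1.2) ∧ ∀ p ∈ l, a ≤ p.1.2 ∧ p.1.2 < b

namespace FreshIn

theorem nil {a b : ℕ} (h : a ≤ b) : FreshIn [] a b := ⟨h, .nil, by simp⟩

theorem append {l l' : List (Obj × Obj)} {a b c : ℕ} (h : FreshIn l a b) (h' : FreshIn l' b c) :
    FreshIn (l ++ l') a c := by
  obtain ⟨hab, hl, hlr⟩ := h
  obtain ⟨hbc, hl', hlr'⟩ := h'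
  refine ⟨hab.trans hbc, List.pairwise_append.2 ⟨hl, hl', fun p hp q hq => ?_⟩, fun p hp => ?_⟩
  · exact (hlr p hp).2.trans_le (hlr' q hq).1
  · rcases List.mem_append.1 hp with hp | hp
    · exact ⟨(hlr p hp).1, (hlr p hp).2.trans_le hbc⟩
    · exact ⟨hab.trans (hlr' p hp).1, (hlr' p hp).2⟩

theorem cons {l : List (Obj × Obj)} {n b : ℕ} (h : FreshIn l (n + 1) b) (r : ℕ) (d : Obj) :
    FreshIn (((r, n), d) :: l) n b :=
  FreshIn.append (l := [((r, n), d)]) ⟨n.le_succ, by simp, by simp⟩ h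

theorem mono {l : List (Obj × Obj)} {a b a' b' : ℕ} (h : FreshIn l a b) (ha : a' ≤ a)
    (hb : b ≤ b') : FreshIn l a' b' :=
  ⟨ha.trans (h.1.trans hb), h.2.1, fun p hp => ⟨ha.trans (h.2.2 p hp).1, (h.2.2 p hp).2.trans_le hb⟩⟩

theorem nodup_keys {l : List (Obj × Obj)} {a b : ℕ} (h : FreshIn l a b) :
    (l.map Prod.fst).Nodup :=
  List.pairwise_map.2 (h.2.1.imp fun hpq hpq' => hpq.ne (congrArg Prod.snd hpq'))

theorem threadedConcat {step : Obj → ℕ → ℕ} {body : Obj → ℕ → List (Obj × Obj)}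
    (h : ∀ o m, FreshIn (body o m) m (step o m)) (l : List Obj) (m : ℕ) :
    FreshIn (threadedConcat step body l m) m (l.foldl (fun m o => step o m) m) := by
  induction l generalizing m with
  | nil => exact nil le_rfl
  | cons o l ih => exact (h o m).append (ih _)

end FreshIn

theorem G_all_snd (D' : Finset Obj) (x r : ℕ) (ψ : SF) (g : ℕ → Obj) (n : ℕ) :
    (G D' (.all x r ψ) g n).2 = (D'.filter (·.1 = r)).toList.foldl
      (fun m o => (G D' ψ (Function.update g x o) m).2) n := by
  rw [G]
  exact (List.foldl_hom Prod.snd fun _ _ => rfl).symm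

section Trace

variable (D : Finset Obj) (vAttr : Obj → ℕ → ℤ) (vExt : Obj → Bool) (D' : Finset Obj)

open Classical in
/-- The pairs (fresh object, its witness in the model) that `G` introduces along the branches
satisfied under `v`, where the instance of a universal quantifier at `o` is followed with `o`
read as `α o`, and skipped when `α o = none`. -/
noncomputable def activeWitnesses (α : Obj → Option Obj) :
    SF → (ℕ → Obj) → ℕ → (ℕ → Obj) → List (Obj × Obj)
  | .and φ ψ, g, n, v => activeWitnesses α φ g n v ++ activeWitnesses α ψ g (G D' φ g n).2 v
  | .or φ ψ, g, n, v =>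
      if SF.Sat D vAttr vExt v φ then activeWitnesses α φ g n v
      else activeWitnesses α ψ g (G D' φ g n).2 v
  | .ex x r ψ, g, n, v =>
      if h : ∃ o, o ∈ D ∧ o.1 = r ∧ vExt o = true ∧ SF.Sat D vAttr vExt (Function.update v x o) ψ
      then ((r, n), h.choose) ::
        activeWitnesses α ψ (Function.update g x (r, n)) (n + 1) (Function.update v x h.choose)
      else []
  | .all x r ψ, g, n, v =>
      threadedConcat (fun o m => (G D' ψ (Function.update g x o) m).2)
        (fun o m => match α o with
          | some d => activeWitnesses α ψ (Function.update g x o) m (Function.update v x d)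
          | none => [])
        (D'.filter (·.1 = r)).toList n
  | _, _, _, _ => []

theorem activeWitnesses_freshIn (α : Obj → Option Obj) (ψ : SF) (g : ℕ → Obj) (n : ℕ)
    (v : ℕ → Obj) : FreshIn (activeWitnesses D vAttr vExt D' α ψ g n v) n (G D' ψ g n).2 := by
  induction ψ generalizing g n v with
  | and φ ψ ih₁ ih₂ =>
    simp only [activeWitnesses, G]
    exact (ih₁ g n v).append (ih₂ g _ v)
  | or φ ψ ih₁ ih₂ =>
    simp only [activeWitnesses, G]
    split_ifs
    · exact (ih₁ g n v).mono le_rfl (ih₂ g _ v).1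
    · exact (ih₂ g _ v).mono (ih₁ g n v).1 le_rfl
  | ex x r ψ ih =>
    simp only [activeWitnesses, G]
    split_ifs
    · exact (ih _ _ _).cons r _
    · exact FreshIn.nil (n.le_succ.trans (ih (Function.update g x (r, n)) (n + 1) v).1)
  | all x r ψ ih =>
    rw [activeWitnesses, G_all_snd]
    refine FreshIn.threadedConcat (fun o m => ?_) _ n
    split
    · exact ih _ _ _
    · exact FreshIn.nil (ih (Function.update g x o) m v).1
  | neg φ ih =>
    simp only [activeWitnesses, G]
    exact FreshIn.nil (ih g n v).1
  | ext a => cases a <;> simpa only [activeWitnesses, G] using FreshIn.nil le_rfl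
  | _ => simpa only [activeWitnesses, G] using FreshIn.nil le_rfl

def witnessPairs : Set (Obj × Obj) := {p | p.2 ∈ D ∧ p.2.1 = p.1.1 ∧ vExt p.2 = true}

theorem finite_witnessPairs_inter (N : ℕ) :
    (witnessPairs D vExt ∩ {p | p.1.2 < N}).Finite := by
  refine ((D ×ˢ Finset.range N).finite_toSet.image fun q => ((q.1.1, q.2), q.1)).subset ?_
  rintro ⟨⟨r, m⟩, d⟩ ⟨⟨hd, hr, -⟩, hm⟩
  exact ⟨(d, m), Finset.mem_product.2 ⟨hd, Finset.mem_range.2 hm⟩, by simp_all⟩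

theorem activeWitnesses_subset_witnessPairs (α : Obj → Option Obj) (ψ : SF) (g : ℕ → Obj)
    (n : ℕ) (v : ℕ → Obj) :
    ∀ p ∈ activeWitnesses D vAttr vExt D' α ψ g n v, p ∈ witnessPairs D vExt := by
  induction ψ generalizing g n v with
  | and φ ψ ih₁ ih₂ =>
    intro p hp
    rcases List.mem_append.1 hp with hp | hp
    · exact ih₁ g n v p hp
    · exact ih₂ g _ v p hp
  | or φ ψ ih₁ ih₂ =>
    simp only [activeWitnesses]
    split_ifs
    · exact ih₁ g n v
    · exact ih₂ g _ v
  | ex x r ψ ih =>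
    simp only [activeWitnesses]
    split_ifs with h
    · rintro p (_ | ⟨_, hp⟩)
      · exact ⟨h.choose_spec.1, h.choose_spec.2.1, h.choose_spec.2.2.1⟩
      · exact ih _ _ _ p hp
    · simp
  | all x r ψ ih =>
    intro p hp
    obtain ⟨o, -, m, hp⟩ := mem_threadedConcat hp
    split at hp
    · exact ih _ _ _ p hp
    · simp at hp
  | _ => simp [activeWitnesses]

theorem activeWitnesses_mono {α β : Obj → Option Obj} (h : optionGraph α ⊆ optionGraph β)
    (ψ : SF) (g : ℕ → Obj) (n : ℕ) (v : ℕ → Obj) :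
    activeWitnesses D vAttr vExt D' α ψ g n v ⊆ activeWitnesses D vAttr vExt D' β ψ g n v := by
  induction ψ generalizing g n v with
  | and φ ψ ih₁ ih₂ =>
    exact List.append_subset.2 ⟨List.subset_append_of_subset_left _ (ih₁ g n v),
      List.subset_append_of_subset_right _ (ih₂ g _ v)⟩
  | or φ ψ ih₁ ih₂ =>
    simp only [activeWitnesses]
    split_ifs
    · exact ih₁ g n v
    · exact ih₂ g _ v
  | ex x r ψ ih =>
    simp only [activeWitnesses]
    split_ifs
    · exact List.cons_subset_cons _ (ih _ _ _)
    · exact List.Subset.refl _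
  | all x r ψ ih =>
    refine threadedConcat_subset (fun o m => ?_) _ n
    cases hα : α o with
    | none => exact List.nil_subset _
    | some d =>
      have hβ : β o = some d := h (show (o, d) ∈ optionGraph α from hα)
      simpa only [hβ] using ih _ _ _
  | _ => simp [activeWitnesses]

theorem exists_optionGraph_eq_activeWitnesses (φ : SF) (g : ℕ → Obj) (n : ℕ) (v : ℕ → Obj) :
    ∃ α, optionGraph α = {p | p ∈ activeWitnesses D vAttr vExt D' α φ g n v} := by
  set W := fun α => activeWitnesses D vAttr vExt D' α φ g n v
  have hgraph : ∀ α, optionGraph (fun o => (W α).lookup o) = {p | p ∈ W α} := fun α =>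
    Set.ext fun _ => List.lookup_eq_some_iff_mem
      (activeWitnesses_freshIn D vAttr vExt D' α φ g n v).nodup_keys
  obtain ⟨α, hα⟩ := exists_isFixedPt_of_optionGraph_mono (fun α o => (W α).lookup o)
    (fun α β h => by
      rw [hgraph, hgraph]
      exact fun _ hp => activeWitnesses_mono D vAttr vExt D' h φ g n v hp)
    (finite_witnessPairs_inter D vExt (G D' φ g n).2)
    (fun α p hp => by
      rw [hgraph] at hp
      exact ⟨activeWitnesses_subset_witnessPairs D vAttr vExt D' α φ g n v p hp,
        ((activeWitnesses_freshIn D vAttr vExt D' α φ g n v).2.2 p hp).2⟩)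
  exact ⟨α, (congrArg optionGraph hα).symm.trans (hgraph α)⟩

end Trace

theorem STm.eval_ground {w w' : Obj → ℕ → ℤ} {g v z : ℕ → Obj} {t : STm} (ht : t.Pure)
    (h : ∀ x ∈ t.vars, w (g x) = w' (v x)) : (t.ground g).eval w z = t.eval w' v := by
  induction t with
  | const c => rfl
  | attr a i =>
    cases a with
    | inl x => exact congrFun (h x (Finset.mem_singleton_self x)) i
    | inr o => exact ht.elim
  | add t t' ih ih' =>
    simp only [STm.ground, STm.eval]
    rw [ih ht.1 fun x hx => h x (Finset.mem_union_left _ hx),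
      ih' ht.2 fun x hx => h x (Finset.mem_union_right _ hx)]
  | negt t ih =>
    simp only [STm.ground, STm.eval]
    rw [ih ht h]

theorem update_link {α : Obj → Option Obj} {g v : ℕ → Obj} {s : Finset ℕ} {x : ℕ} {o d : Obj}
    (hlink : ∀ y ∈ s.erase x, α (g y) = some (v y)) (ho : α o = some d) :
    ∀ y ∈ s, α (Function.update g x o y) = some (Function.update v x d y) := by
  intro y hy
  by_cases hyx : y = x
  · subst hyx
    simpa using ho
  · simpa [hyx] using hlink y (Finset.mem_erase.2 ⟨hyx, hy⟩)

theorem sat_foldl_and {w : Obj → ℕ → ℤ} {e : Obj → Bool} {z : ℕ → Obj}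
    {inst : Obj → ℕ → SF × ℕ} {body : Obj → ℕ → List (Obj × Obj)} {S : Set (Obj × Obj)}
    {L : List Obj} (h : ∀ o ∈ L, ∀ m, {p | p ∈ body o m} ⊆ S → SF.Sat ∅ w e z (inst o m).1)
    {F : SF} (hF : SF.Sat ∅ w e z F) {n : ℕ}
    (hL : {p | p ∈ threadedConcat (fun o m => (inst o m).2) body L n} ⊆ S) :
    SF.Sat ∅ w e z
      (L.foldl (fun acc o => (.and acc.1 (inst o acc.2).1, (inst o acc.2).2)) (F, n)).1 := by
  induction L generalizing F n with
  | nil => exact hF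
  | cons o L ih =>
    simp only [threadedConcat, List.mem_append, Set.ofPred_or, Set.union_subset_iff] at hL
    exact ih (fun o' ho' => h o' (List.mem_cons_of_mem _ ho'))
      (F := .and F (inst o n).1) ⟨hF, h o List.mem_cons_self n hL.1⟩ hL.2

section Grounding

variable {D : Finset Obj} {vAttr : Obj → ℕ → ℤ} {vExt : Obj → Bool} {D' : Finset Obj}

def inducedAttr (vAttr : Obj → ℕ → ℤ) (α : Obj → Option Obj) : Obj → ℕ → ℤ :=
  fun o => (α o).elim 0 vAttr

def inducedExt (α : Obj → Option Obj) : Obj → Bool := fun o => (α o).isSome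

theorem sat_G_of_sat {α : Obj → Option Obj} (hα : optionGraph α ⊆ witnessPairs D vExt)
    {ψ : SF} (hnnf : IsNNF ψ) (hpure : ψ.Pure) {g : ℕ → Obj} {n : ℕ} {v : ℕ → Obj}
    (hsat : SF.Sat D vAttr vExt v ψ) (hlink : ∀ x ∈ ψ.freeVars, α (g x) = some (v x))
    (htrace : {p | p ∈ activeWitnesses D vAttr vExt D' α ψ g n v} ⊆ optionGraph α)
    (z : ℕ → Obj) : SF.Sat ∅ (inducedAttr vAttr α) (inducedExt α) z (G D' ψ g n).1 := by
  induction hnnf generalizing g n v with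
  | tru => simp [G, SF.Sat]
  | fls => exact hsat.elim
  | eq t t' | lt t t' | neq t t' | nlt t t' =>
    have hterm : ∀ s : STm, s.Pure → s.vars ⊆ t.vars ∪ t'.vars →
        (s.ground g).eval (inducedAttr vAttr α) z = s.eval vAttr v := fun s hs hsub =>
      STm.eval_ground hs fun x hx => by simp [inducedAttr, hlink x (hsub hx)]
    simp only [SF.Pure] at hpure
    simpa only [G, SF.Sat, hterm t hpure.1 Finset.subset_union_left,
      hterm t' hpure.2 Finset.subset_union_right] using hsat
  | ext a | next a =>
    cases a with
    | inl x =>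
      have hx := hlink x (Finset.mem_singleton_self x)
      have hwit := (hα (show (g x, v x) ∈ optionGraph α from hx)).2.2
      simp_all [G, SF.Sat, inducedExt]
    | inr o => exact hpure.elim
  | and _ _ ih₁ ih₂ =>
    simp only [SF.freeVars, Finset.mem_union] at hlink
    simp only [activeWitnesses, List.mem_append] at htrace
    simp only [G, SF.Sat]
    exact ⟨ih₁ hpure.1 hsat.1 (fun x hx => hlink x (.inl hx)) fun p hp => htrace (.inl hp),
      ih₂ hpure.2 hsat.2 (fun x hx => hlink x (.inr hx)) fun p hp => htrace (.inr hp)⟩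
  | @or φ ψ _ _ ih₁ ih₂ =>
    simp only [SF.freeVars, Finset.mem_union] at hlink
    simp only [activeWitnesses] at htrace
    simp only [G, SF.Sat]
    by_cases hφ : SF.Sat D vAttr vExt v φ
    · rw [if_pos hφ] at htrace
      exact .inl (ih₁ hpure.1 hφ (fun x hx => hlink x (.inl hx)) htrace)
    · rw [if_neg hφ] at htrace
      exact .inr (ih₂ hpure.2 (hsat.resolve_left hφ) (fun x hx => hlink x (.inr hx)) htrace)
  | ex x r _ ih =>
    have hex : ∃ o ∈ D, o.1 = r ∧ vExt o = true ∧ SF.Sat D vAttr vExt (Function.update v x o) _ :=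
      hsat
    simp only [activeWitnesses, dif_pos hex] at htrace
    have hd : α (r, n) = some hex.choose := htrace List.mem_cons_self
    simp only [G, SF.Sat]
    exact ⟨by simp [inducedExt, hd], ih hpure hex.choose_spec.2.2.2
      (update_link hlink hd) fun p hp => htrace (List.mem_cons_of_mem _ hp)⟩
  | @all x r χ _ ih =>
    rw [G]
    refine sat_foldl_and (F := .tru) (inst := fun o m =>
      (.or (.neg (.ext (.inr o))) (G D' χ (Function.update g x o) m).1,
        (G D' χ (Function.update g x o) m).2)) (fun o ho m hm => ?_) trivial htrace
    cases hαo : α o with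
    | none => exact .inl (by simp [SF.Sat, inducedExt, hαo])
    | some d =>
      obtain ⟨hdD, hdr, hdE⟩ := hα (show (o, d) ∈ optionGraph α from hαo)
      have hor : o.1 = r := (Finset.mem_filter.1 (Finset.mem_toList.1 ho)).2
      refine .inr (ih hpure (hsat d hdD (hdr.trans hor) hdE) (update_link hlink hαo) fun p hp => hm ?_)
      simpa only [hαo] using hp

end Grounding

/-- Soundness of the grounding over-approximation: if the quantifier-free
formula `G(φ, D')` is unsatisfiable (no valuation of the attributes and `ext`
flags of the objects satisfies it), then the closed NNF formula `φ` has no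
satisfying solution in any finite domain. -/
theorem grounding_overapprox_sound (φ : SF)
    (hnnf : IsNNF φ) (hpure : φ.Pure) (hclosed : φ.freeVars = ∅)
    (D' : Finset Obj) (env0 : ℕ → Obj)
    (hunsat : ¬ ∃ (wAttr : Obj → ℕ → ℤ) (wExt : Obj → Bool),
        SF.Sat (∅ : Finset Obj) wAttr wExt (fun _ => ((0 : ℕ), (0 : ℕ)))
          (G D' φ env0 0).1) :
    ¬ ∃ (D : Finset Obj) (vAttr : Obj → ℕ → ℤ) (vExt : Obj → Bool)
        (env : ℕ → Obj), SF.Sat D vAttr vExt env φ := by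
  rintro ⟨D, vAttr, vExt, env, hsat⟩
  obtain ⟨α, hα⟩ := exists_optionGraph_eq_activeWitnesses D vAttr vExt D' φ env0 0 env
  have hwit : optionGraph α ⊆ witnessPairs D vExt := hα ▸
    activeWitnesses_subset_witnessPairs D vAttr vExt D' α φ env0 0 env
  exact hunsat ⟨inducedAttr vAttr α, inducedExt α,
    sat_G_of_sat hwit hnnf hpure hsat (by simp [hclosed]) hα.ge _⟩
end
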